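/- arXiv:2509.19118 — 2 statements merged into one kernel-verified Lean document; each statement's English description precedes it below -/
import Mathlib

section
/- Section lemma (special case n=4, dim E = 1): let \tau \subset Z^4_{\ge 0} be a B-facet containing a point Q = (0,0,0,c) on the x_4-ray with c \ge 2 (so {Q} is a V-face but not a B-face), and suppose \tau \setminus {Q} lies in an affine 2-plane H inside the affine span of \tau with aff(H \cup {Q}) = aff(\tau). Mark those sides of \tau_H = \tau \cap H that are intersections with coordinate hyperplanes {x_i = 0} (i \in {1,2,3}) such that H contains lattice points with x_i = 1. Then \tau is a B-facet if and only if \tau_H is a marked B-polygon. -/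
/-- Cast an integer lattice point to a rational point. -/
def toQ {n : ℕ} (v : Fin n → ℤ) : Fin n → ℚ := fun i => (v i : ℚ)

/-- A (3-dimensional) B-simplex in `ℤ⁴_{≥0}`: a tetrahedron which is a pyramid of lattice
height 1 whose base triangle lies in a coordinate hyperplane `{x_i = 0}`:
some coordinate `i` equals `1` at one vertex (the apex) and `0` at the other three. -/
def IsBSimplex4 (v : Fin 4 → (Fin 4 → ℤ)) : Prop :=
  ∃ i : Fin 4, ∃ a : Fin 4, v a i = 1 ∧ ∀ b : Fin 4, b ≠ a → v b i = 0

/-- A B-facet in `ℤ⁴_{≥0}`: a finite 3-dimensional set of lattice points with nonnegative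
coordinates, lying on an affine hyperplane `∑ aᵢxᵢ = b` with all `aᵢ > 0` (positive normal
covector), such that every 3-dimensional simplex (affinely independent quadruple) with
vertices in it is a B-simplex. -/
def IsBFacet (S : Finset (Fin 4 → ℤ)) : Prop :=
  (∀ p ∈ S, ∀ i, 0 ≤ p i) ∧
  (∃ a : Fin 4 → ℤ, (∀ i, 0 < a i) ∧ ∃ b : ℤ, ∀ p ∈ S, (∑ i, a i * p i) = b) ∧
  (∃ v : Fin 4 → (Fin 4 → ℤ), (∀ j, v j ∈ S) ∧ AffineIndependent ℚ (fun j => toQ (v j))) ∧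
  (∀ v : Fin 4 → (Fin 4 → ℤ), (∀ j, v j ∈ S) →
    AffineIndependent ℚ (fun j => toQ (v j)) → IsBSimplex4 v)

/-- A B₁-facet: a pyramid of height 1 with base on a coordinate hyperplane. -/
def IsB1Facet (S : Finset (Fin 4 → ℤ)) : Prop :=
  ∃ i : Fin 4, ∃ q ∈ S, q i = 1 ∧ ∀ p ∈ S, p ≠ q → p i = 0

/-- A B₂-facet: its projection on some coordinate 2-plane is the triangle
`(0,0), (1,0), (0,1)`. -/
def IsB2Facet (S : Finset (Fin 4 → ℤ)) : Prop :=
  ∃ i j : Fin 4, i ≠ j ∧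
    (∀ p ∈ S, (p i = 0 ∧ p j = 0) ∨ (p i = 1 ∧ p j = 0) ∨ (p i = 0 ∧ p j = 1)) ∧
    (∃ p ∈ S, p i = 0 ∧ p j = 0) ∧ (∃ p ∈ S, p i = 1 ∧ p j = 0) ∧
    (∃ p ∈ S, p i = 0 ∧ p j = 1)

/-- A possibly degenerate B₂-facet: its projection on some coordinate 2-plane is contained
in the triangle `(0,0), (1,0), (0,1)`. -/
def IsDegB2Facet (S : Finset (Fin 4 → ℤ)) : Prop :=
  ∃ i j : Fin 4, i ≠ j ∧
    ∀ p ∈ S, (p i = 0 ∧ p j = 0) ∨ (p i = 1 ∧ p j = 0) ∨ (p i = 0 ∧ p j = 1)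

/-- A flat border: after permuting coordinates, it contains a triangle `A B C` with
`A, B` of the form `(0,0,⋆,⋆)` and `C` of the form `(1,1,⋆,⋆)`, and all the other points
are contained in `{x₁ = 0} ∪ {x₂ = 0}`. -/
def IsFlatBorder (S : Finset (Fin 4 → ℤ)) : Prop :=
  ∃ i j : Fin 4, i ≠ j ∧ ∃ A ∈ S, ∃ B ∈ S, ∃ C ∈ S,
    AffineIndependent ℚ (fun k => toQ (![A, B, C] k)) ∧
    A i = 0 ∧ A j = 0 ∧ B i = 0 ∧ B j = 0 ∧ C i = 1 ∧ C j = 1 ∧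
    ∀ p ∈ S, p = C ∨ p i = 0 ∨ p j = 0

/-- The standard cross-polytope. -/
def crossPolytope : Finset (Fin 4 → ℤ) :=
  {![1,1,0,0], ![1,0,1,0], ![1,0,0,1], ![0,1,1,0], ![0,1,0,1], ![0,0,1,1]}


/-- Adding a point outside the affine span of an affinely independent triple gives an
affinely independent quadruple. -/
lemma consIndepAux (q : Fin 4 → ℚ) (v : Fin 3 → (Fin 4 → ℚ))
    (hv : AffineIndependent ℚ v) (hq : q ∉ affineSpan ℚ (Set.range v)) :
    AffineIndependent ℚ (Fin.cons q v : Fin 4 → (Fin 4 → ℚ)) := by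
  apply AffineIndependent.affineIndependent_of_notMem_span (i := (0 : Fin 4))
  · let e : {y : Fin 4 // y ≠ 0} ↪ Fin 3 :=
      ⟨fun x => (x.1).pred x.2, by
        intro a b h
        have h' : (a.1).pred a.2 = (b.1).pred b.2 := h
        apply Subtype.ext
        rw [← Fin.succ_pred a.1 a.2, ← Fin.succ_pred b.1 b.2, h']⟩
    have h3 := hv.comp_embedding e
    have heq : (v ∘ e) = fun x : {y : Fin 4 // y ≠ 0} =>
        (Fin.cons q v : Fin 4 → (Fin 4 → ℚ)) x.1 := by
      funext x
      show v ((x.1).pred x.2) = (Fin.cons q v : Fin 4 → (Fin 4 → ℚ)) x.1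
      conv_rhs => rw [← Fin.succ_pred x.1 x.2]
      rw [Fin.cons_succ]
    rwa [heq] at h3
  · have himg : (Fin.cons q v : Fin 4 → (Fin 4 → ℚ)) '' {x | x ≠ 0} = Set.range v := by
      ext y
      constructor
      · rintro ⟨x, hx, rfl⟩
        refine ⟨x.pred hx, ?_⟩
        conv_rhs => rw [← Fin.succ_pred x hx]
        rw [Fin.cons_succ]
      · rintro ⟨k, rfl⟩
        exact ⟨k.succ, Fin.succ_ne_zero k, Fin.cons_succ _ _ _⟩
    rw [himg]
    exact hq

/-- If a quadruple obtained by adding a point to an affinely independent triple is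
affinely dependent, the point lies in the affine span of the triple. -/
lemma memSpanOfDepAux (q : Fin 4 → ℚ) (v : Fin 3 → (Fin 4 → ℚ))
    (hv : AffineIndependent ℚ v)
    (hdep : ¬ AffineIndependent ℚ (Fin.cons q v : Fin 4 → (Fin 4 → ℚ))) :
    q ∈ affineSpan ℚ (Set.range v) := by
  by_contra h
  exact hdep (consIndepAux q v hv h)

/-- section lemma, case `n = 4`, `dim E = 1`: let `τ ⊂ ℤ⁴_{≥0}` be a finite
3-dimensional set with nonnegative coordinates lying on a hyperplane with positive normal
covector, containing the point `Q = (0,0,0,c)` with `c ≥ 2` on the `x₄`-ray, and such that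
`τ \ {Q}` is 2-dimensional (lies in an affine 2-plane `H`). Mark those sides of
`τ_H = τ \ {Q}` coming from coordinate hyperplanes `{x_i = 0}` (`i ∈ {1,2,3}`) such that
`H` contains lattice points with `x_i = 1`. Then `τ` is a B-facet if and only if `τ_H` is
a marked B-polygon, i.e. every triangle of `τ_H` is a height-1 pyramid whose base lies on
such a marked coordinate hyperplane. -/
theorem stmt18 (S : Finset (Fin 4 → ℤ)) (c : ℤ) (hc : 2 ≤ c)
    (Q : Fin 4 → ℤ) (hQdef : Q = fun m => if m = 3 then c else 0) (hQ : Q ∈ S)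
    (hnn : ∀ p ∈ S, ∀ i, 0 ≤ p i)
    (hplane : ∃ a : Fin 4 → ℤ, (∀ i, 0 < a i) ∧ ∃ b : ℤ, ∀ p ∈ S, (∑ i, a i * p i) = b)
    (hdim3 : ∃ v : Fin 4 → (Fin 4 → ℤ), (∀ j, v j ∈ S) ∧
      AffineIndependent ℚ (fun j => toQ (v j)))
    (hdim2 : ∃ w : Fin 3 → (Fin 4 → ℤ), (∀ k, w k ∈ S.erase Q) ∧
      AffineIndependent ℚ (fun k => toQ (w k)))
    (hplanar : ∀ v : Fin 4 → (Fin 4 → ℤ), (∀ k, v k ∈ S.erase Q) →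
      ¬ AffineIndependent ℚ (fun k => toQ (v k))) :
    (IsBFacet S ↔
      ∀ v : Fin 3 → (Fin 4 → ℤ), (∀ k, v k ∈ S.erase Q) →
        AffineIndependent ℚ (fun k => toQ (v k)) →
        ∃ i : Fin 4, i ≠ 3 ∧
          (∃ z : Fin 4 → ℤ,
            toQ z ∈ affineSpan ℚ (toQ '' (↑(S.erase Q) : Set (Fin 4 → ℤ))) ∧ z i = 1) ∧
          ∃ a : Fin 3, v a i = 1 ∧ ∀ b : Fin 3, b ≠ a → v b i = 0) := by
  obtain ⟨w, hwmem, hwind⟩ := hdim2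
  have hQc : Q 3 = c := by simp [hQdef]
  have hQ0 : ∀ i : Fin 4, i ≠ 3 → Q i = 0 := by intro i hi; simp [hQdef, hi]
  -- every point of `S.erase Q` lies in the affine span of the triple `w`
  have hmemspan : ∀ p ∈ S.erase Q,
      toQ p ∈ affineSpan ℚ (Set.range fun k => toQ (w k)) := by
    intro p hp
    apply memSpanOfDepAux _ _ hwind
    intro hind
    apply hplanar (Fin.cons p w)
    · intro k
      induction k using Fin.cases with
      | zero => simpa using hp
      | succ k => simpa using hwmem k
    · convert hind using 1
      funext k
      induction k using Fin.cases with
      | zero => simp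
      | succ k => simp
  -- `Q` is not in the affine span of the triple `w`
  have hQnot : toQ Q ∉ affineSpan ℚ (Set.range fun k => toQ (w k)) := by
    intro hmem
    obtain ⟨v4, hv4S, hv4i⟩ := hdim3
    have hsub : ∀ j, toQ (v4 j) ∈ affineSpan ℚ (Set.range fun k => toQ (w k)) := by
      intro j
      by_cases hj : v4 j = Q
      · rw [hj]; exact hmem
      · exact hmemspan _ (Finset.mem_erase.2 ⟨hj, hv4S j⟩)
    have h3 : Module.finrank ℚ (vectorSpan ℚ (Set.range fun j => toQ (v4 j))) = 3 :=
      hv4i.finrank_vectorSpan (by simp)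
    have hle : vectorSpan ℚ (Set.range fun j => toQ (v4 j)) ≤
        vectorSpan ℚ (Set.range fun k => toQ (w k)) := by
      have hss : Set.range (fun j => toQ (v4 j)) ⊆
          (affineSpan ℚ (Set.range fun k => toQ (w k)) : Set (Fin 4 → ℚ)) := by
        rintro _ ⟨j, rfl⟩
        exact hsub j
      exact (vectorSpan_mono ℚ hss).trans (direction_affineSpan (k := ℚ) _).le
    have h2 : Module.finrank ℚ (vectorSpan ℚ (Set.range fun k => toQ (w k))) ≤ 2 :=
      finrank_vectorSpan_range_le ℚ (fun k => toQ (w k)) (by simp)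
    have := Submodule.finrank_mono hle
    omega
  constructor
  · -- forward direction
    intro hBF v hv hvind
    have hQnotv : toQ Q ∉ affineSpan ℚ (Set.range fun k => toQ (v k)) := by
      intro h
      apply hQnot
      have hsubset : Set.range (fun k => toQ (v k)) ⊆
          (affineSpan ℚ (Set.range fun k => toQ (w k)) : Set (Fin 4 → ℚ)) := by
        rintro _ ⟨k, rfl⟩
        exact hmemspan _ (hv k)
      have hle := affineSpan_le.2 hsubset
      exact hle h
    have hcons := consIndepAux (toQ Q) (fun k => toQ (v k)) hvind hQnotv
    have hkey := hBF.2.2.2 (Fin.cons Q v)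
      (by
        intro k
        induction k using Fin.cases with
        | zero => simpa using hQ
        | succ k => simpa using (Finset.mem_erase.1 (hv k)).2)
      (by
        convert hcons using 1
        funext k
        induction k using Fin.cases with
        | zero => simp
        | succ k => simp)
    obtain ⟨i, a, ha1, ha0⟩ := hkey
    induction a using Fin.cases with
    | zero =>
      exfalso
      have : Q i = 1 := by simpa using ha1
      by_cases hi : i = 3
      · rw [hi, hQc] at this; omega
      · rw [hQ0 i hi] at this; omega
    | succ k =>
      have hQi : Q i = 0 := by
        have := ha0 0 (Fin.succ_ne_zero k).symm
        simpa using this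
      have hi3 : i ≠ 3 := by
        intro h
        rw [h, hQc] at hQi; omega
      refine ⟨i, hi3, ⟨v k, ?_, ?_⟩, k, ?_, ?_⟩
      · apply subset_affineSpan
        exact Set.mem_image_of_mem _ (Finset.mem_coe.2 (hv k))
      · simpa using ha1
      · simpa using ha1
      · intro b hb
        have := ha0 b.succ (by simpa [Fin.succ_inj] using hb)
        simpa using this
  · -- backward direction
    intro hRHS
    refine ⟨hnn, hplane, hdim3, ?_⟩
    intro v hvS hvind
    by_cases hQin : ∃ j, v j = Q
    · obtain ⟨j0, hj0⟩ := hQin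
      have hinj : Function.Injective v := by
        intro a b hab
        apply hvind.injective
        show toQ (v a) = toQ (v b)
        rw [hab]
      have humem : ∀ k, v (j0.succAbove k) ∈ S.erase Q := by
        intro k
        refine Finset.mem_erase.2 ⟨?_, hvS _⟩
        intro h
        exact Fin.succAbove_ne j0 k (hinj (h.trans hj0.symm))
      have huind : AffineIndependent ℚ (fun k => toQ (v (j0.succAbove k))) :=
        hvind.comp_embedding j0.succAboveEmb
      obtain ⟨i, hi3, -, a, ha1, ha0⟩ := hRHS _ humem huind
      refine ⟨i, j0.succAbove a, ha1, ?_⟩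
      intro b hb
      by_cases hbj : b = j0
      · subst hbj
        rw [hj0]
        exact hQ0 i hi3
      · obtain ⟨b', rfl⟩ := Fin.exists_succAbove_eq hbj
        exact ha0 b' (fun h => hb (congrArg _ h))
    · push_neg at hQin
      exact absurd hvind (hplanar v (fun k => Finset.mem_erase.2 ⟨hQin k, hvS k⟩))
end

section
/- The set {(0,0,0,c_1), (1,1,0,0), (0,1,0,1), (b,0,1,0), (0,0,c_2,0)} (a flat B-border circuit), for any choice of parameters making it 3-dimensional and for which the five points lie on a common hyperplane with positive normal covector, is a B-facet: every tetrahedron with vertices in it is a pyramid of lattice height 1 with base on a coordinate hyperplane. -/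
/-- The five points of the flat B-border circuit, as a family. -/
def stmt19pts (c1 c2 b : ℤ) : Fin 5 → Fin 4 → ℤ :=
  ![![0,0,0,c1], ![1,1,0,0], ![0,1,0,1], ![b,0,1,0], ![0,0,c2,0]]

/-- Mask of known constant entries: `some true` = 1, `some false` = 0, `none` = parameter. -/
def stmt19mask : Fin 5 → Fin 4 → Option Bool :=
  ![![some false, some false, some false, none],
    ![some true,  some true,  some false, some false],
    ![some false, some true,  some false, some true],
    ![none,       some false, some true,  some false],
    ![some false, some false, none,       some false]]

set_option maxRecDepth 4000 in
lemma stmt19key : ∀ f : Fin 4 → Fin 5, Function.Injective f →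
    ∃ i a : Fin 4, stmt19mask (f a) i = some true ∧
      ∀ j : Fin 4, j ≠ a → stmt19mask (f j) i = some false := by decide

lemma stmt19bridge1 (c1 c2 b : ℤ) : ∀ ℓ i, stmt19mask ℓ i = some true →
    stmt19pts c1 c2 b ℓ i = 1 := by
  intro ℓ i
  fin_cases ℓ <;> fin_cases i <;> simp [stmt19mask, stmt19pts, Matrix.vecHead, Matrix.vecTail]

lemma stmt19bridge0 (c1 c2 b : ℤ) : ∀ ℓ i, stmt19mask ℓ i = some false →
    stmt19pts c1 c2 b ℓ i = 0 := by
  intro ℓ i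
  fin_cases ℓ <;> fin_cases i <;> simp [stmt19mask, stmt19pts, Matrix.vecHead, Matrix.vecTail]

/-- a flat B-border circuit
`{(0,0,0,c₁), (1,1,0,0), (0,1,0,1), (b,0,1,0), (0,0,c₂,0)}`, for any choice of parameters
making it 3-dimensional and lying on a common hyperplane with positive normal covector,
is a B-facet: every tetrahedron with vertices in it is a pyramid of lattice height 1 with
base on a coordinate hyperplane. -/
theorem stmt19 (c1 c2 b : ℤ) (hc1 : 0 ≤ c1) (hc2 : 0 ≤ c2) (hb : 0 ≤ b)
    (S : Finset (Fin 4 → ℤ))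
    (hS : S = {![0,0,0,c1], ![1,1,0,0], ![0,1,0,1], ![b,0,1,0], ![0,0,c2,0]})
    (hplane : ∃ a : Fin 4 → ℤ, (∀ i, 0 < a i) ∧ ∃ d : ℤ, ∀ p ∈ S, (∑ i, a i * p i) = d)
    (hdim : ∃ v : Fin 4 → (Fin 4 → ℤ), (∀ j, v j ∈ S) ∧
      AffineIndependent ℚ (fun j => toQ (v j))) :
    IsBFacet S := by
  refine ⟨?_, hplane, hdim, ?_⟩
  · intro p hp i
    rw [hS] at hp
    simp only [Finset.mem_insert, Finset.mem_singleton] at hp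
    rcases hp with h|h|h|h|h <;> subst h <;> fin_cases i <;> simp <;> omega
  · intro v hv hindep
    have hinjQ : Function.Injective (fun j => toQ (v j)) := hindep.injective
    have hinj : Function.Injective v := by
      intro j k h
      exact hinjQ (show toQ (v j) = toQ (v k) by rw [h])
    have hlab : ∀ j, ∃ ℓ : Fin 5, v j = stmt19pts c1 c2 b ℓ := by
      intro j
      have := hv j
      rw [hS] at this
      simp only [Finset.mem_insert, Finset.mem_singleton] at this
      rcases this with h|h|h|h|h
      · exact ⟨0, by simpa [stmt19pts] using h⟩
      · exact ⟨1, by simpa [stmt19pts] using h⟩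
      · exact ⟨2, by simpa [stmt19pts] using h⟩
      · exact ⟨3, by simpa [stmt19pts] using h⟩
      · exact ⟨4, by simpa [stmt19pts] using h⟩
    choose f hf using hlab
    have hfin : Function.Injective f := by
      intro j k h
      apply hinj
      rw [hf j, hf k, h]
    obtain ⟨i, a, h1, h0⟩ := stmt19key f hfin
    refine ⟨i, a, ?_, ?_⟩
    · rw [hf a]; exact stmt19bridge1 c1 c2 b _ _ h1
    · intro j hj
      rw [hf j]; exact stmt19bridge0 c1 c2 b _ _ (h0 j hj)
end
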